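/- Let X₁, X₂, … be i.i.d. uniform on the unit circle 𝕊¹ ⊂ ℂ, and for z in the open unit disk set F_n(z) = (1/√n) ∑_{k=1}^n 1/(z − X_k). Then for any 0 < r < s < 1, E[ ( sup_{|z| ≤ r} |F_n(z)| )² ] ≤ 1 / ( (s − r)² (1 − s)² ) for every n. -/

import Mathlib

open MeasureTheory ProbabilityTheory Filter Metric

/-- Logarithmic potential of a measure on ℂ. -/
noncomputable def logPot (μ : Measure ℂ) (z : ℂ) : ℝ :=
  ∫ w, Real.log ‖z - w‖ ∂μ

/-- Topological support of a measure on ℂ. -/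
def msupport (μ : Measure ℂ) : Set ℂ :=
  {x : ℂ | ∀ U ∈ nhds x, 0 < μ U}

/-- Assumption (A): for every compact `K`, `sup_{z ∈ K} ∫ (log|z-w|)² dμ(w) < ∞`. -/
def AssumptionA (μ : Measure ℂ) : Prop :=
  ∀ K : Set ℂ, IsCompact K → ∃ C : ℝ, ∀ z ∈ K,
    ∫⁻ w, ENNReal.ofReal ((Real.log ‖z - w‖) ^ 2) ∂μ ≤ ENNReal.ofReal C

/-- Assumption (D): `μ(B(z,r)) ≤ C rᵉ` for all `z` and `r > 0`. -/
def AssumptionD (μ : Measure ℂ) : Prop :=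
  ∃ C : ℝ, ∃ ε : ℝ, 0 < ε ∧ ∀ z : ℂ, ∀ r : ℝ, 0 < r →
    μ (Metric.ball z r) ≤ ENNReal.ofReal (C * r ^ ε)

/-- The filled unit lemniscate of `p_n(z) = ∏_{k<n} (z - X k ω)`. -/
def lemniscate {Ω : Type*} (X : ℕ → Ω → ℂ) (n : ℕ) (ω : Ω) : Set ℂ :=
  {z : ℂ | ‖∏ k ∈ Finset.range n, (z - X k ω)‖ < 1}

/-- Inradius of a planar set: the sup of radii of open disks contained in it (0 if none). -/
noncomputable def inradius (U : Set ℂ) : ℝ :=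
  sSup {r : ℝ | 0 < r ∧ ∃ c : ℂ, Metric.ball c r ⊆ U}

/-- The uniform probability measure on the unit circle in ℂ. -/
noncomputable def unifCircle : Measure ℂ :=
  (ENNReal.ofReal (2 * Real.pi))⁻¹ •
    Measure.map (fun θ : ℝ => Complex.exp (θ * Complex.I))
      (volume.restrict (Set.Ioc 0 (2 * Real.pi)))

/-! On the unit circle the Poisson kernel at `w` is `(1 - ‖w‖²) ‖(w - x)⁻¹‖²`, so the Poisson
formula gives `E ‖(w - X)⁻¹‖² = (1 - ‖w‖²)⁻¹`, while `E (w - X)⁻¹ = 0` by the mean value property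
after the reflection `x ↦ x⁻¹`. Independence kills the cross terms, hence
`E ‖F_n(w)‖² ≤ (1 - ‖w‖²)⁻¹`.
The Cauchy formula for `F_n²` on the circle of radius `s` bounds `sup_{‖z‖ ≤ r} ‖F_n(z)‖²` by
`s / (s - r)` times the circle average of `‖F_n‖²`; taking expectations and exchanging the order of
integration gives `s / ((s - r) (1 - s²))`, which is at most `1 / ((s - r)² (1 - s)²)`. -/

open Real ComplexConjugate

section UnifCircle

variable {E : Type*} [NormedAddCommGroup E] [NormedSpace ℝ E]

theorem integral_unifCircle {f : ℂ → E} (hf : StronglyMeasurable f) :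
    ∫ x, f x ∂unifCircle = circleAverage f 0 1 := by
  rw [unifCircle, integral_smul_measure, integral_map (by fun_prop) hf.aestronglyMeasurable,
    ENNReal.toReal_inv, ENNReal.toReal_ofReal two_pi_pos.le, circleAverage,
    intervalIntegral.integral_of_le two_pi_pos.le]
  simp [circleMap, mul_comm]

theorem ae_norm_eq_one_unifCircle : ∀ᵐ x ∂unifCircle, ‖x‖ = 1 := by
  have hexp : Measurable fun θ : ℝ ↦ Complex.exp (θ * Complex.I) := by fun_prop
  refine Measure.ae_smul_measure ((ae_map_iff hexp.aemeasurable ?_).2 (.of_forall fun θ ↦ ?_)) _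
  · exact measurableSet_eq_fun measurable_norm measurable_const
  · exact Complex.norm_exp_ofReal_mul_I θ

end UnifCircle

theorem circleAverage_inv_sub {w : ℂ} (hw : ‖w‖ < 1) :
    circleAverage (fun x ↦ (w - x)⁻¹) 0 1 = 0 := by
  have hden : ∀ x ∈ closedBall (0 : ℂ) 1, w * x - 1 ≠ 0 := by
    intro x hx h
    have : ‖w * x‖ < 1 := by
      rw [norm_mul]
      exact mul_lt_one_of_nonneg_of_lt_one_left (norm_nonneg _) hw (by simpa using hx)
    simp [sub_eq_zero.1 h] at this
  rw [← circleAverage_zero_one_congr_inv]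
  calc circleAverage (fun x ↦ (w - x⁻¹)⁻¹) 0 1
      = circleAverage (fun x ↦ x / (w * x - 1)) 0 1 := by
        refine circleAverage_congr_sphere fun x hx ↦ ?_
        have hx0 : x ≠ 0 := by rintro rfl; simp at hx
        have := hden x (sphere_subset_closedBall (by simpa using hx))
        field_simp
    _ = 0 / (w * 0 - 1) := by
        refine DiffContOnCl.circleAverage (DifferentiableOn.diffContOnCl ?_)
        rw [abs_one, closure_ball _ one_ne_zero]
        exact differentiableOn_id.div (by fun_prop) hden
    _ = 0 := zero_div _

theorem circleAverage_norm_inv_sub_sq {w : ℂ} (hw : ‖w‖ < 1) :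
    circleAverage (fun x ↦ ‖(w - x)⁻¹‖ ^ 2) 0 1 = (1 - ‖w‖ ^ 2)⁻¹ := by
  have hP := (InnerProductSpace.harmonicOnNhd_const (1 : ℝ)).circleAverage_poissonKernel_smul
    (c := 0) (R := 1) (w := w) (by simpa using hw)
  have hEq : Set.EqOn (poissonKernel 0 w • fun _ ↦ (1 : ℝ))
      (fun x ↦ (1 - ‖w‖ ^ 2) • ‖(w - x)⁻¹‖ ^ 2) (sphere 0 |1|) := by
    intro x hx
    have hx1 : ‖x‖ = 1 := by simpa using hx
    simp [poissonKernel_def, hx1, norm_sub_rev x w, div_eq_mul_inv]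
  rw [circleAverage_congr_sphere hEq, circleAverage_fun_smul, smul_eq_mul] at hP
  exact (inv_eq_of_mul_eq_one_right hP).symm

theorem norm_le_circleAverage_norm {E : Type*} [NormedAddCommGroup E] [NormedSpace ℂ E]
    [CompleteSpace E] {f : ℂ → E} {c z : ℂ} {r s : ℝ} (hf : DiffContOnCl ℂ f (ball c s))
    (hz : z ∈ closedBall c r) (hrs : r < s) :
    ‖f z‖ ≤ s / (s - r) * circleAverage (fun ζ ↦ ‖f ζ‖) c s := by
  have hs : 0 < s := (dist_nonneg.trans hz).trans_lt hrs
  have hsabs : |s| = s := abs_of_pos hs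
  have hcont : Continuous fun θ ↦ f (circleMap c s θ) :=
    hf.continuousOn.comp_continuous (continuous_circleMap c s) fun θ ↦ by
      rw [closure_ball c hs.ne']
      exact sphere_subset_closedBall (circleMap_mem_sphere c hs.le θ)
  have hkernel : ∀ θ, ‖(circleMap c s θ - c) / (circleMap c s θ - z)‖ ≤ s / (s - r) := by
    intro θ
    have hcs : dist (circleMap c s θ) c = s := by
      rw [dist_eq_norm, circleMap_sub_center, norm_circleMap_zero, hsabs]
    have hdist : s - r ≤ ‖circleMap c s θ - z‖ := by
      rw [← dist_eq_norm]
      linarith [mem_closedBall.1 hz, dist_triangle (circleMap c s θ) z c]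
    rw [norm_div, circleMap_sub_center, norm_circleMap_zero, hsabs]
    gcongr
  have hf' : DiffContOnCl ℂ f (ball c |s|) := by rwa [hsabs]
  rw [← hf'.circleAverage_smul_div (by rw [hsabs]; exact closedBall_subset_ball hrs hz),
    circleAverage, circleAverage, norm_smul, Real.norm_of_nonneg (by positivity), smul_eq_mul,
    ← mul_assoc, mul_comm _ (2 * π)⁻¹, mul_assoc, ← intervalIntegral.integral_const_mul]
  gcongr
  refine intervalIntegral.norm_integral_le_of_norm_le two_pi_pos.le (.of_forall fun θ _ ↦ ?_)
    ((continuous_const.mul hcont.norm).intervalIntegrable _ _)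
  rw [norm_smul]
  gcongr
  exact hkernel θ

theorem sSup_norm_sq_le_circleAverage {f : ℂ → ℂ} {c : ℂ} {r s : ℝ}
    (hf : DiffContOnCl ℂ f (ball c s)) (hr : 0 ≤ r) (hrs : r < s) :
    sSup ((fun z ↦ ‖f z‖) '' closedBall c r) ^ 2 ≤
      s / (s - r) * circleAverage (fun z ↦ ‖f z‖ ^ 2) c s := by
  set B := s / (s - r) * circleAverage (fun z ↦ ‖f z‖ ^ 2) c s
  have hbound : ∀ z ∈ closedBall c r, ‖f z‖ ^ 2 ≤ B := fun z hz ↦ by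
    simpa only [B, Function.comp_def, norm_pow] using
      norm_le_circleAverage_norm ((differentiable_pow 2).comp_diffContOnCl hf) hz hrs
  have hB : 0 ≤ B := (sq_nonneg _).trans (hbound c (mem_closedBall_self hr))
  have hsup : sSup ((fun z ↦ ‖f z‖) '' closedBall c r) ≤ √B :=
    Real.sSup_le (by rintro _ ⟨z, hz, rfl⟩; exact Real.le_sqrt_of_sq_le (hbound z hz))
      (Real.sqrt_nonneg B)
  calc sSup ((fun z ↦ ‖f z‖) '' closedBall c r) ^ 2 ≤ √B ^ 2 :=
        pow_le_pow_left₀ (Real.sSup_nonneg (by rintro _ ⟨z, -, rfl⟩; positivity)) hsup 2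
    _ = B := Real.sq_sqrt hB

section RandomHolomorphic

variable {Ω : Type*} [MeasurableSpace Ω] {P : Measure Ω}

theorem circleAverage_eq_setIntegral (f : ℂ → ℝ) (c : ℂ) (R : ℝ) :
    circleAverage f c R = (2 * π)⁻¹ * ∫ θ in Set.Ioc 0 (2 * π), f (circleMap c R θ) := by
  rw [circleAverage, smul_eq_mul, intervalIntegral.integral_of_le two_pi_pos.le]

theorem integrable_prod_circleMap [IsFiniteMeasure P] {G : Ω → ℂ → ℝ} {c : ℂ} {R C : ℝ}
    (hGm : Measurable (Function.uncurry G)) (hC : ∀ᵐ ω ∂P, ∀ z ∈ sphere c |R|, ‖G ω z‖ ≤ C) :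
    Integrable (fun p : Ω × ℝ ↦ G p.1 (circleMap c R p.2))
      (P.prod (volume.restrict (Set.Ioc 0 (2 * π)))) :=
  .of_bound (hGm.comp (measurable_fst.prodMk
    ((measurable_circleMap c R).comp measurable_snd))).aestronglyMeasurable C <|
      (Measure.quasiMeasurePreserving_fst.ae hC).mono fun p h ↦
        h _ (circleMap_mem_sphere' c R p.2)

theorem integrable_circleAverage {G : Ω → ℂ → ℝ} {c : ℂ} {R : ℝ}
    (hG : Integrable (fun p : Ω × ℝ ↦ G p.1 (circleMap c R p.2))
      (P.prod (volume.restrict (Set.Ioc 0 (2 * π))))) :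
    Integrable (fun ω ↦ circleAverage (G ω) c R) P := by
  simp_rw [circleAverage_eq_setIntegral]
  exact hG.integral_prod_left.const_mul _

theorem integral_circleAverage_le [SFinite P] {G : Ω → ℂ → ℝ} {c : ℂ} {R M : ℝ}
    (hG : Integrable (fun p : Ω × ℝ ↦ G p.1 (circleMap c R p.2))
      (P.prod (volume.restrict (Set.Ioc 0 (2 * π)))))
    (hM : ∀ z ∈ sphere c |R|, ∫ ω, G ω z ∂P ≤ M) :
    ∫ ω, circleAverage (G ω) c R ∂P ≤ M := by
  simp_rw [circleAverage_eq_setIntegral]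
  rw [integral_const_mul, integral_integral_swap hG]
  calc (2 * π)⁻¹ * ∫ θ in Set.Ioc 0 (2 * π), ∫ ω, G ω (circleMap c R θ) ∂P
      ≤ (2 * π)⁻¹ * ∫ θ in Set.Ioc 0 (2 * π), M := by
        refine mul_le_mul_of_nonneg_left ?_ (by positivity)
        exact integral_mono hG.integral_prod_right (integrable_const M)
          fun θ ↦ hM _ (circleMap_mem_sphere' c R θ)
    _ = M := by
        rw [setIntegral_const, Real.volume_real_Ioc_of_le two_pi_pos.le, sub_zero, smul_eq_mul,
          ← mul_assoc, inv_mul_cancel₀ two_pi_pos.ne', one_mul]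

theorem integral_sSup_norm_sq_le [IsFiniteMeasure P] {F : Ω → ℂ → ℂ} {c : ℂ} {r s C M : ℝ}
    (hr : 0 ≤ r) (hrs : r < s) (hFm : Measurable (Function.uncurry F))
    (hF : ∀ᵐ ω ∂P, DiffContOnCl ℂ (F ω) (ball c s))
    (hC : ∀ᵐ ω ∂P, ∀ z ∈ sphere c s, ‖F ω z‖ ≤ C)
    (hM : ∀ z ∈ sphere c s, ∫ ω, ‖F ω z‖ ^ 2 ∂P ≤ M) :
    ∫ ω, sSup ((fun z ↦ ‖F ω z‖) '' closedBall c r) ^ 2 ∂P ≤ s / (s - r) * M := by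
  have hsabs : |s| = s := abs_of_pos (hr.trans_lt hrs)
  have hG := integrable_prod_circleMap (G := fun ω z ↦ ‖F ω z‖ ^ 2) (R := s) (C := C ^ 2)
    (hFm.norm.pow_const 2) <| hC.mono fun ω h z hz ↦ by
      rw [norm_pow, norm_norm]
      exact pow_le_pow_left₀ (norm_nonneg _) (h z (hsabs ▸ hz)) 2
  have hM' : ∀ z ∈ sphere c |s|, ∫ ω, ‖F ω z‖ ^ 2 ∂P ≤ M := by rwa [hsabs]
  have hcoef : 0 ≤ s / (s - r) := div_nonneg (hr.trans hrs.le) (sub_nonneg.2 hrs.le)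
  have hM0 : 0 ≤ M :=
    (integral_nonneg fun ω ↦ circleAverage_nonneg_of_nonneg fun z _ ↦ sq_nonneg ‖F ω z‖).trans
      (integral_circleAverage_le hG hM')
  by_cases hint : Integrable (fun ω ↦ sSup ((fun z ↦ ‖F ω z‖) '' closedBall c r) ^ 2) P
  · calc _ ≤ ∫ ω, s / (s - r) * circleAverage (fun z ↦ ‖F ω z‖ ^ 2) c s ∂P :=
          integral_mono_ae hint ((integrable_circleAverage hG).const_mul _)
            (hF.mono fun ω h ↦ sSup_norm_sq_le_circleAverage h hr hrs)
      _ ≤ s / (s - r) * M := by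
          rw [integral_const_mul]
          exact mul_le_mul_of_nonneg_left (integral_circleAverage_le hG hM') hcoef
  · rw [integral_undef hint]
    exact mul_nonneg hcoef hM0

end RandomHolomorphic

theorem norm_inv_sub_le {w x : ℂ} (hw : ‖w‖ < 1) (hx : ‖x‖ = 1) :
    ‖(w - x)⁻¹‖ ≤ (1 - ‖w‖)⁻¹ := by
  rw [norm_inv]
  refine inv_anti₀ (by linarith) ?_
  have := norm_sub_norm_le x w
  rw [norm_sub_rev, hx] at this
  linarith

theorem norm_mul_sum_inv_sub_le {ι : Type*} (t : Finset ι) {x : ι → ℂ} (hx : ∀ k, ‖x k‖ = 1)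
    {w : ℂ} (hw : ‖w‖ < 1) (a : ℂ) :
    ‖a * ∑ k ∈ t, (w - x k)⁻¹‖ ≤ ‖a‖ * (t.card * (1 - ‖w‖)⁻¹) := by
  rw [norm_mul]
  gcongr
  exact (norm_sum_le_of_le _ fun k _ ↦ norm_inv_sub_le hw (hx k)).trans_eq (by simp)

theorem diffContOnCl_mul_sum_inv_sub {ι : Type*} {U : Set ℂ} {x : ι → ℂ} (t : Finset ι)
    (hx : ∀ k ∈ t, x k ∉ closure U) (a : ℂ) :
    DiffContOnCl ℂ (fun z ↦ a * ∑ k ∈ t, (z - x k)⁻¹) U :=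
  DifferentiableOn.diffContOnCl <| (differentiableOn_const a).mul <|
    .fun_sum fun k hk ↦ (differentiableOn_id.sub_const _).inv fun _ hz ↦
      sub_ne_zero.2 (ne_of_mem_of_not_mem hz (hx k hk))

section Moments

variable {Ω : Type*} [MeasurableSpace Ω] {P : Measure Ω}

theorem integral_norm_sum_sq_of_indepFun {ι : Type*} {Y : ι → Ω → ℂ} (s : Finset ι)
    (hY : ∀ i ∈ s, MemLp (Y i) 2 P)
    (hindep : (s : Set ι).Pairwise fun i j ↦ IndepFun (Y i) (Y j) P)
    (hmean : ∀ i ∈ s, ∫ ω, Y i ω ∂P = 0) :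
    ∫ ω, ‖∑ i ∈ s, Y i ω‖ ^ 2 ∂P = ∑ i ∈ s, ∫ ω, ‖Y i ω‖ ^ 2 ∂P := by
  have hint : ∀ i ∈ s, ∀ j ∈ s, Integrable (fun ω ↦ Y i ω * conj (Y j ω)) P :=
    fun i hi j hj ↦ (hY i hi).integrable_mul (hY j hj).star
  have horth : ∀ i ∈ s, ∀ j ∈ s, j ≠ i → ∫ ω, Y i ω * conj (Y j ω) ∂P = 0 := by
    intro i hi j hj hji
    calc ∫ ω, Y i ω * conj (Y j ω) ∂P = (∫ ω, Y i ω ∂P) * ∫ ω, conj (Y j ω) ∂P :=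
          (hindep hi hj hji.symm).integral_fun_comp_mul_comp (f := id) (g := conj)
            (hY i hi).1.aemeasurable (hY j hj).1.aemeasurable aestronglyMeasurable_id
            Complex.continuous_conj.aestronglyMeasurable
      _ = 0 := by rw [hmean i hi, zero_mul]
  apply Complex.ofReal_injective
  push_cast
  simp_rw [← integral_complex_ofReal, Complex.ofReal_pow, ← Complex.mul_conj', map_sum,
    Finset.sum_mul_sum]
  rw [integral_finsetSum _ fun i hi ↦ integrable_finsetSum _ fun j hj ↦ hint i hi j hj]
  refine Finset.sum_congr rfl fun i hi ↦ ?_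
  rw [integral_finsetSum _ fun j hj ↦ hint i hi j hj,
    Finset.sum_eq_single_of_mem i hi fun j hj hji ↦ horth i hi j hj hji]

theorem integral_comp_eq_circleAverage {E : Type*} [NormedAddCommGroup E] [NormedSpace ℝ E]
    {V : Ω → ℂ} (hV : Measurable V) (hVd : Measure.map V P = unifCircle) {f : ℂ → E}
    (hf : StronglyMeasurable f) :
    ∫ ω, f (V ω) ∂P = circleAverage f 0 1 := by
  rw [← integral_map hV.aemeasurable hf.aestronglyMeasurable, hVd, integral_unifCircle hf]

theorem ae_norm_eq_one_of_map_eq_unifCircle {V : Ω → ℂ} (hV : Measurable V)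
    (hVd : Measure.map V P = unifCircle) : ∀ᵐ ω ∂P, ‖V ω‖ = 1 :=
  ae_of_ae_map (p := fun x ↦ ‖x‖ = 1) hV.aemeasurable (hVd ▸ ae_norm_eq_one_unifCircle)

theorem integral_norm_sum_inv_sub_sq [IsProbabilityMeasure P] {X : ℕ → Ω → ℂ}
    (hmeas : ∀ i, Measurable (X i)) (hid : ∀ i, Measure.map (X i) P = unifCircle)
    (hindep : iIndepFun X P) {w : ℂ} (hw : ‖w‖ < 1) (n : ℕ) :
    ∫ ω, ‖∑ k ∈ Finset.range n, (w - X k ω)⁻¹‖ ^ 2 ∂P = n * (1 - ‖w‖ ^ 2)⁻¹ := by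
  have hφ : Measurable fun x : ℂ ↦ (w - x)⁻¹ := by fun_prop
  have hL2 : ∀ k, MemLp (fun ω ↦ (w - X k ω)⁻¹) 2 P := fun k ↦
    .of_bound (hφ.comp (hmeas k)).aestronglyMeasurable _ <|
      (ae_norm_eq_one_of_map_eq_unifCircle (hmeas k) (hid k)).mono fun _ ↦ norm_inv_sub_le hw
  rw [integral_norm_sum_sq_of_indepFun _ (fun k _ ↦ hL2 k)
    (fun i _ j _ hij ↦ (hindep.indepFun hij).comp hφ hφ)
    (fun k _ ↦ by rw [integral_comp_eq_circleAverage (hmeas k) (hid k) hφ.stronglyMeasurable,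
      circleAverage_inv_sub hw])]
  simp_rw [integral_comp_eq_circleAverage (hmeas _) (hid _)
    (hφ.norm.pow_const 2).stronglyMeasurable, circleAverage_norm_inv_sub_sq hw]
  simp

theorem integral_norm_sq_inv_sqrt_mul_sum_inv_sub_le [IsProbabilityMeasure P] {X : ℕ → Ω → ℂ}
    (hmeas : ∀ i, Measurable (X i)) (hid : ∀ i, Measure.map (X i) P = unifCircle)
    (hindep : iIndepFun X P) {w : ℂ} (hw : ‖w‖ < 1) (n : ℕ) :
    ∫ ω, ‖(√n : ℂ)⁻¹ * ∑ k ∈ Finset.range n, (w - X k ω)⁻¹‖ ^ 2 ∂P ≤ (1 - ‖w‖ ^ 2)⁻¹ := by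
  simp_rw [norm_mul, mul_pow]
  rw [integral_const_mul, integral_norm_sum_inv_sub_sq hmeas hid hindep hw, norm_inv,
    Complex.norm_real, Real.norm_of_nonneg (Real.sqrt_nonneg _), inv_pow,
    Real.sq_sqrt n.cast_nonneg, ← mul_assoc]
  exact mul_le_of_le_one_left (inv_nonneg.2 (by nlinarith [norm_nonneg w])) inv_mul_le_one

end Moments

theorem statement17
    {Ω : Type*} [MeasurableSpace Ω] (P : Measure Ω) [IsProbabilityMeasure P]
    (X : ℕ → Ω → ℂ) (hmeas : ∀ i, Measurable (X i))
    (hid : ∀ i, Measure.map (X i) P = unifCircle)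
    (hindep : iIndepFun X P)
    (r s : ℝ) (hr : 0 < r) (hrs : r < s) (hs : s < 1) (n : ℕ) :
    ∫ ω, (sSup ((fun z : ℂ =>
        ‖(Real.sqrt n : ℂ)⁻¹ * ∑ k ∈ Finset.range n, (z - X k ω)⁻¹‖) ''
          Metric.closedBall (0 : ℂ) r)) ^ 2 ∂P ≤
      1 / ((s - r) ^ 2 * (1 - s) ^ 2) := by
  have hX : ∀ᵐ ω ∂P, ∀ k, ‖X k ω‖ = 1 :=
    ae_all_iff.2 fun k ↦ ae_norm_eq_one_of_map_eq_unifCircle (hmeas k) (hid k)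
  have hclosure : closure (ball (0 : ℂ) s) ⊆ ball 0 1 :=
    closure_ball_subset_closedBall.trans (closedBall_subset_ball hs)
  have ha : 0 < s - r := sub_pos.2 hrs
  have hb : 0 < 1 - s := sub_pos.2 hs
  calc _ ≤ s / (s - r) * (1 - s ^ 2)⁻¹ := by
        refine integral_sSup_norm_sq_le hr.le hrs (by fun_prop) ?_
          (C := ‖(√n : ℂ)⁻¹‖ * ((Finset.range n).card * (1 - s)⁻¹)) ?_ fun z hz ↦ ?_
        · refine hX.mono fun ω hω ↦ diffContOnCl_mul_sum_inv_sub _ (fun k _ hk ↦ ?_) _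
          simpa [hω k] using hclosure hk
        · refine hX.mono fun ω hω z hz ↦ ?_
          rw [mem_sphere_zero_iff_norm] at hz
          simpa only [hz] using norm_mul_sum_inv_sub_le _ hω (hz.trans_lt hs) _
        · rw [mem_sphere_zero_iff_norm] at hz
          simpa only [hz] using
            integral_norm_sq_inv_sqrt_mul_sum_inv_sub_le hmeas hid hindep (hz.trans_lt hs) n
    _ ≤ 1 / ((s - r) ^ 2 * (1 - s) ^ 2) := by
        have hu1 : (s - r) * (1 - s) ≤ 1 := by nlinarith
        rw [show 1 - s ^ 2 = (1 - s) * (1 + s) by ring, ← div_eq_mul_inv, div_div,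
          div_le_div_iff₀ (mul_pos ha (mul_pos hb (by linarith))) (by positivity)]
        nlinarith [mul_nonneg (mul_nonneg (hr.trans hrs).le (mul_pos ha hb).le) (sub_nonneg.2 hu1)]
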